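/- Let ζ be an irrational real number and k a positive integer. If λ_{k,1}(ζ) > 1, then λ_{1,1}(ζ) = k·λ_{k,1}(ζ) + k − 1 > 2k − 1 ≥ k (in particular λ_{1,1}(ζ) = ∞ if λ_{k,1}(ζ) = ∞). -/

import Mathlib

/-!
If `(x, y₁, …, y_k)` approximates `(ζ, …, ζ^k)` to order `X^{-η}` with `|x| ≤ X` and `η > 1`, the
integer minors `x y_{i+1} - y_i y₁` are `O(X^{1-η})`, hence vanish, so `x^{k-1} y_k = y₁^k`.
Writing `x = g q`, `y₁ = g p` with `q, p` coprime forces `q^{k-1} ∣ g`, so `|q|^k ≤ X` and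
`|ζ q - p| ≤ X^{-η} / g ≤ |q|^{-(kη + k - 1)}`; irrationality of `ζ` makes `|q|` unbounded.
Conversely, a good approximation `(x, y)` of `ζ` at `X` yields `(x^k, x^{k-1} y, …, y^k)`, which
approximates `(ζ, …, ζ^k)` at `X^k` to order `X^{k-1-η}`.
-/

open scoped ENNReal

/-- The system `|x| ≤ X`, `max_{1≤i≤k} |ζ_i·x − y_i| ≤ X^(−η)` has at least `j`
linearly independent integer solutions `(x, y_1, …, y_k) ∈ ℤ^(k+1)`.
Here the solution vector `v i : Fin (k+1) → ℤ` has `x = v i 0` and `y_m = v i m.succ`. -/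
def HasSolutions (k : ℕ) (ζ : Fin k → ℝ) (η X : ℝ) (j : ℕ) : Prop :=
  ∃ v : Fin j → (Fin (k + 1) → ℤ), LinearIndependent ℤ v ∧
    ∀ i : Fin j, |(v i 0 : ℝ)| ≤ X ∧
      ∀ m : Fin k, |ζ m * (v i 0 : ℝ) - (v i m.succ : ℝ)| ≤ X ^ (-η)

/-- `λ_{k,j}(ζ⃗)`: the supremum in `[0,∞]` of all `η ∈ ℝ` such that the system has at
least `j` linearly independent solutions for arbitrarily large real `X`. -/
noncomputable def lambdaVec (k j : ℕ) (ζ : Fin k → ℝ) : ℝ≥0∞ :=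
  sSup {e : ℝ≥0∞ | ∃ η : ℝ, e = ENNReal.ofReal η ∧
    ∀ X₀ : ℝ, ∃ X : ℝ, X₀ ≤ X ∧ HasSolutions k ζ η X j}

/-- `λ̂_{k,j}(ζ⃗)`: the supremum in `[0,∞]` of all `η ∈ ℝ` such that the system has at
least `j` linearly independent solutions for every sufficiently large real `X`. -/
noncomputable def lambdaHatVec (k j : ℕ) (ζ : Fin k → ℝ) : ℝ≥0∞ :=
  sSup {e : ℝ≥0∞ | ∃ η : ℝ, e = ENNReal.ofReal η ∧
    ∃ X₀ : ℝ, ∀ X : ℝ, X₀ ≤ X → HasSolutions k ζ η X j}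

/-- `λ_{k,j}(ζ) = λ_{k,j}(ζ, ζ², …, ζ^k)`. -/
noncomputable def lambdaPow (k j : ℕ) (ζ : ℝ) : ℝ≥0∞ :=
  lambdaVec k j fun i => ζ ^ ((i : ℕ) + 1)

/-- `λ̂_{k,j}(ζ) = λ̂_{k,j}(ζ, ζ², …, ζ^k)`. -/
noncomputable def lambdaHatPow (k j : ℕ) (ζ : ℝ) : ℝ≥0∞ :=
  lambdaHatVec k j fun i => ζ ^ ((i : ℕ) + 1)

open Filter

def PowApprox (k : ℕ) (ζ η : ℝ) : Prop :=
  ∃ᶠ X in atTop, HasSolutions k (fun i : Fin k => ζ ^ ((i : ℕ) + 1)) η X 1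

noncomputable def supOfReal (P : ℝ → Prop) : ℝ≥0∞ :=
  sSup {e | ∃ η, e = ENNReal.ofReal η ∧ P η}

lemma lambdaPow_one_eq_supOfReal (k : ℕ) (ζ : ℝ) :
    lambdaPow k 1 ζ = supOfReal (PowApprox k ζ) := by
  simp only [lambdaPow, lambdaVec, supOfReal, PowApprox, frequently_atTop]

section supOfReal

variable {P Q : ℝ → Prop}

lemma ofReal_le_supOfReal {η : ℝ} (h : P η) : ENNReal.ofReal η ≤ supOfReal P :=
  le_sSup ⟨η, rfl, h⟩

lemma supOfReal_le {a : ℝ≥0∞} (h : ∀ η, P η → ENNReal.ofReal η ≤ a) : supOfReal P ≤ a :=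
  sSup_le <| by rintro _ ⟨η, rfl, hη⟩; exact h η hη

lemma exists_lt_ofReal_of_lt_supOfReal {b : ℝ≥0∞} (h : b < supOfReal P) :
    ∃ η, b < ENNReal.ofReal η ∧ P η := by
  obtain ⟨_, ⟨η, rfl, hη⟩, hb⟩ := lt_sSup_iff.mp h
  exact ⟨η, hb, hη⟩

lemma ofReal_le_supOfReal_of_forall_lt {s : ℝ} (h : ∀ t < s, P t) :
    ENNReal.ofReal s ≤ supOfReal P := by
  refine le_of_forall_lt_imp_le_of_dense fun b hb => ?_
  have hb' : b ≠ ⊤ := hb.ne_top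
  rw [← ENNReal.ofReal_toReal hb']
  exact ofReal_le_supOfReal (h _ ((ENNReal.lt_ofReal_iff_toReal_lt hb').mp hb))

lemma ofReal_mul_supOfReal_add_le {a c θ : ℝ} (ha : 0 ≤ a) (hc : 0 ≤ c) (hθ : 0 ≤ θ)
    (hP : ∃ η, θ < η ∧ P η) (hPQ : ∀ η, θ < η → P η → Q (a * η + c)) :
    ENNReal.ofReal a * supOfReal P + ENNReal.ofReal c ≤ supOfReal Q := by
  obtain ⟨η₀, hθη₀, hη₀⟩ := hP
  have key : ∀ η, θ < η → P η →
      ENNReal.ofReal a * ENNReal.ofReal η + ENNReal.ofReal c ≤ supOfReal Q := by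
    intro η hθη hη
    rw [← ENNReal.ofReal_mul ha, ← ENNReal.ofReal_add (mul_nonneg ha (by linarith)) hc]
    exact ofReal_le_supOfReal (hPQ η hθη hη)
  rw [supOfReal, ENNReal.mul_sSup, ENNReal.biSup_add' ⟨_, η₀, rfl, hη₀⟩]
  refine iSup₂_le ?_
  rintro _ ⟨η, rfl, hη⟩
  rcases lt_or_ge θ η with hθη | hηθ
  · exact key η hθη hη
  · calc ENNReal.ofReal a * ENNReal.ofReal η + ENNReal.ofReal c
        ≤ ENNReal.ofReal a * ENNReal.ofReal η₀ + ENNReal.ofReal c := by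
          gcongr; linarith
      _ ≤ supOfReal Q := key η₀ hθη₀ hη₀

lemma supOfReal_le_ofReal_mul_add {a c : ℝ} (ha : 0 < a) (hc : 0 ≤ c)
    (hQP : ∀ η, c < η → Q η → ∀ t < (η - c) / a, P t) :
    supOfReal Q ≤ ENNReal.ofReal a * supOfReal P + ENNReal.ofReal c := by
  refine supOfReal_le fun η hη => ?_
  rcases le_or_gt η c with hηc | hcη
  · exact (ENNReal.ofReal_le_ofReal hηc).trans le_add_self
  · calc ENNReal.ofReal η
        = ENNReal.ofReal a * ENNReal.ofReal ((η - c) / a) + ENNReal.ofReal c := by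
          rw [← ENNReal.ofReal_mul ha.le, mul_div_cancel₀ _ ha.ne',
            ← ENNReal.ofReal_add (by linarith) hc, sub_add_cancel]
      _ ≤ ENNReal.ofReal a * supOfReal P + ENNReal.ofReal c := by
          gcongr
          exact ofReal_le_supOfReal_of_forall_lt (hQP η hcη hη)

end supOfReal

lemma hasSolutions_one_iff {k : ℕ} {ζ : Fin k → ℝ} {η X : ℝ} :
    HasSolutions k ζ η X 1 ↔ ∃ w : Fin (k + 1) → ℤ, w ≠ 0 ∧ |(w 0 : ℝ)| ≤ X ∧
      ∀ m : Fin k, |ζ m * w 0 - w m.succ| ≤ X ^ (-η) := by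
  constructor
  · rintro ⟨v, hv, hb⟩
    exact ⟨v 0, linearIndependent_unique_iff.mp hv, hb 0⟩
  · rintro ⟨w, hw, hb⟩
    exact ⟨fun _ => w, linearIndependent_unique_iff.mpr hw, fun _ => hb⟩

lemma head_ne_zero_of_abs_mul_sub_le {k : ℕ} {ζ : Fin k → ℝ} {δ : ℝ} {w : Fin (k + 1) → ℤ}
    (hw : w ≠ 0) (hδ : δ < 1) (happrox : ∀ m : Fin k, |ζ m * w 0 - w m.succ| ≤ δ) :
    w 0 ≠ 0 := by
  intro h0
  refine hw (funext fun i => Fin.cases h0 (fun m => ?_) i)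
  have hm := happrox m
  rw [h0, Int.cast_zero, mul_zero, zero_sub, abs_neg] at hm
  exact Int.abs_lt_one_iff.mp (by exact_mod_cast hm.trans_lt hδ)

lemma Irrational.exists_pos_forall_lt_abs {ζ : ℝ} (hζ : Irrational ζ) (B : ℝ) :
    ∃ c > 0, ∀ q p : ℤ, q ≠ 0 → |ζ * q - p| < c → B < |(q : ℝ)| := by
  -- `1` is inserted only to make `s` nonempty
  set s : Finset ℤ := insert 1 ((Finset.Icc (-⌈B⌉) ⌈B⌉).erase 0)
  have hs : ∀ q ∈ s, q ≠ 0 := by simp +contextual [s]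
  set f : ℤ → ℝ := fun q => |ζ * q - round (ζ * q)|
  have hf : ∀ q : ℤ, q ≠ 0 → 0 < f q := fun q hq =>
    abs_pos.mpr (sub_ne_zero.mpr ((hζ.mul_intCast hq).ne_int _))
  obtain ⟨q₀, hq₀s, hq₀⟩ := s.exists_min_image f ⟨1, Finset.mem_insert_self _ _⟩
  refine ⟨f q₀, hf q₀ (hs q₀ hq₀s), fun q p hq hlt => ?_⟩
  by_contra! hqB
  have hqs : q ∈ s := by
    refine Finset.mem_insert_of_mem (Finset.mem_erase.mpr ⟨hq, Finset.mem_Icc.mpr ?_⟩)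
    exact abs_le.mp (by exact_mod_cast hqB.trans (Int.le_ceil B))
  linarith [hq₀ q hqs, round_le (ζ * q) p]

lemma pow_mul_eq_pow_of_mul_eq_mul {M : Type*} [CommMonoid M] {k : ℕ} {Y : ℕ → M}
    (h : ∀ i < k, Y 0 * Y (i + 1) = Y i * Y 1) : ∀ i < k, Y 0 ^ i * Y (i + 1) = Y 1 ^ (i + 1) := by
  intro i hi
  induction i with
  | zero => simp
  | succ i ih =>
    calc Y 0 ^ (i + 1) * Y (i + 1 + 1) = Y 0 ^ i * (Y 0 * Y (i + 1 + 1)) := by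
          rw [pow_succ, mul_assoc]
      _ = Y 0 ^ i * Y (i + 1) * Y 1 := by rw [h (i + 1) hi, mul_assoc]
      _ = Y 1 ^ (i + 1 + 1) := by rw [ih (by omega), pow_succ _ (i + 1)]

lemma mul_eq_mul_of_abs_pow_mul_sub_le {ζ X δ : ℝ} {k : ℕ} {Y : ℕ → ℤ}
    (hY : ∀ i ≤ k, |ζ ^ i * Y 0 - Y i| ≤ δ) (hX : |(Y 0 : ℝ)| ≤ X) (hδX : δ ≤ X)
    (hsmall : 4 * (|ζ| + 1) ^ k * X * δ < 1) {i : ℕ} (hi : i < k) :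
    Y 0 * Y (i + 1) = Y i * Y 1 := by
  set M := (|ζ| + 1) ^ k
  set u : ℕ → ℝ := fun j => ζ ^ j * Y 0 - Y j
  have hu : ∀ j ≤ k, |u j| ≤ δ := hY
  have hδ : 0 ≤ δ := (abs_nonneg _).trans (hu 0 (Nat.zero_le k))
  have hX0 : 0 ≤ X := (abs_nonneg _).trans hX
  have hM1 : 1 ≤ M := one_le_pow₀ (by linarith [abs_nonneg ζ])
  have hMζ : ∀ j ≤ k, |ζ| ^ j ≤ M := fun j hj =>
    (pow_le_pow_left₀ (abs_nonneg ζ) (by linarith) j).trans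
      (pow_le_pow_right₀ (by linarith [abs_nonneg ζ]) hj)
  have hminor : ((Y 0 * Y (i + 1) - Y i * Y 1 : ℤ) : ℝ)
      = ζ ^ i * Y 0 * u 1 + ζ * Y 0 * u i - (Y 0 * u (i + 1) + u i * u 1) := by
    simp only [u]; push_cast; ring
  have h1 : |ζ ^ i * Y 0 * u 1| ≤ M * X * δ := by
    rw [abs_mul, abs_mul, abs_pow]
    have := hMζ i hi.le
    have := hu 1 (by omega)
    gcongr
  have h2 : |ζ * Y 0 * u i| ≤ M * X * δ := by
    rw [abs_mul, abs_mul]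
    have := pow_one |ζ| ▸ hMζ 1 (by omega)
    have := hu i hi.le
    gcongr
  have h3 : |Y 0 * u (i + 1)| ≤ M * X * δ := by
    rw [abs_mul]
    calc |(Y 0 : ℝ)| * |u (i + 1)| ≤ X * δ := mul_le_mul hX (hu (i + 1) hi) (abs_nonneg _) hX0
      _ ≤ M * X * δ := by rw [mul_assoc]; exact le_mul_of_one_le_left (mul_nonneg hX0 hδ) hM1
  have h4 : |u i * u 1| ≤ M * X * δ := by
    rw [abs_mul]
    calc |u i| * |u 1| ≤ X * δ := mul_le_mul (hu i hi.le |>.trans hδX) (hu 1 (by omega)) (abs_nonneg _) hX0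
      _ ≤ M * X * δ := by rw [mul_assoc]; exact le_mul_of_one_le_left (mul_nonneg hX0 hδ) hM1
  have hlt : |((Y 0 * Y (i + 1) - Y i * Y 1 : ℤ) : ℝ)| < 1 := by
    rw [hminor]
    calc _ ≤ |ζ ^ i * Y 0 * u 1 + ζ * Y 0 * u i| + |Y 0 * u (i + 1) + u i * u 1| := abs_sub _ _
      _ ≤ |ζ ^ i * Y 0 * u 1| + |ζ * Y 0 * u i| + (|Y 0 * u (i + 1)| + |u i * u 1|) :=
          add_le_add (abs_add_le _ _) (abs_add_le _ _)
      _ < 1 := by linarith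
  exact sub_eq_zero.mp (Int.abs_lt_one_iff.mp (by exact_mod_cast hlt))

lemma exists_mul_eq_of_pow_mul_eq_pow_succ {x y z : ℤ} {k : ℕ} (hx : x ≠ 0)
    (h : x ^ k * z = y ^ (k + 1)) : ∃ g q p : ℤ, 0 < g ∧ x = g * q ∧ y = g * p ∧ |q| ^ k ≤ g := by
  obtain ⟨g, q, p, hg, hqp, rfl, rfl⟩ := Int.exists_gcd_one' (Int.gcd_pos_of_ne_zero_left y hx)
  have hg' : (0 : ℤ) < g := by exact_mod_cast hg
  have hdvd : q ^ k ∣ g * p ^ (k + 1) := by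
    refine ⟨z, mul_left_cancel₀ (pow_ne_zero k hg'.ne') ?_⟩
    linear_combination -h
  have hcop : IsCoprime (q ^ k) (p ^ (k + 1)) := (Int.isCoprime_iff_gcd_eq_one.mpr hqp).pow
  refine ⟨g, q, p, hg', mul_comm _ _, mul_comm _ _, ?_⟩
  rw [← abs_pow]
  exact Int.le_of_dvd hg' ((abs_dvd _ _).mpr (hcop.dvd_of_dvd_mul_right hdvd))

lemma rpow_neg_div_le_rpow {X g Q η : ℝ} {n : ℕ} (hη : 0 ≤ η) (hQ : 0 < Q)
    (hQX : Q ^ (n + 1) ≤ X) (hQg : Q ^ n ≤ g) :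
    X ^ (-η) / g ≤ Q ^ (-((n + 1) * η + n)) := by
  calc X ^ (-η) / g ≤ (Q ^ (n + 1)) ^ (-η) / Q ^ n :=
        div_le_div₀ (Real.rpow_nonneg (pow_pos hQ _).le _)
          (Real.rpow_le_rpow_of_nonpos (pow_pos hQ _) hQX (neg_nonpos.mpr hη)) (pow_pos hQ n) hQg
    _ = Q ^ (-((n + 1) * η + n)) := by
        rw [← Real.rpow_natCast, ← Real.rpow_natCast, ← Real.rpow_mul hQ.le, ← Real.rpow_sub hQ]
        push_cast
        ring_nf

lemma exists_seq_of_hasSolutions_pow {k : ℕ} {ζ η X : ℝ} (hδ : X ^ (-η) < 1)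
    (hs : HasSolutions k (fun i : Fin k => ζ ^ ((i : ℕ) + 1)) η X 1) :
    ∃ Y : ℕ → ℤ, Y 0 ≠ 0 ∧ |(Y 0 : ℝ)| ≤ X ∧ ∀ i ≤ k, |ζ ^ i * Y 0 - Y i| ≤ X ^ (-η) := by
  obtain ⟨w, hw, hwX, hwm⟩ := hasSolutions_one_iff.mp hs
  have h0 : Fin.ofNat (k + 1) 0 = 0 := rfl
  refine ⟨fun i => w (Fin.ofNat (k + 1) i), ?_, ?_, ?_⟩
  · simpa [h0] using head_ne_zero_of_abs_mul_sub_le hw hδ hwm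
  · simpa [h0] using hwX
  rintro (_ | i) hi
  · simpa [h0] using Real.rpow_nonneg ((abs_nonneg _).trans hwX) _
  · have hcast : Fin.ofNat (k + 1) (i + 1) = Fin.succ ⟨i, by omega⟩ :=
      Fin.ext (by simp [Nat.mod_eq_of_lt (show i + 1 < k + 1 by omega)])
    simp only [hcast, h0]
    exact hwm ⟨i, by omega⟩

lemma exists_approx_of_hasSolutions_pow {k : ℕ} {ζ η X : ℝ} (hk : 0 < k) (hη : 0 ≤ η)
    (hX : 1 ≤ X) (hsmall : 4 * (|ζ| + 1) ^ k * X * X ^ (-η) < 1)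
    (hs : HasSolutions k (fun i : Fin k => ζ ^ ((i : ℕ) + 1)) η X 1) :
    ∃ q p : ℤ, q ≠ 0 ∧ |ζ * q - p| ≤ X ^ (-η) ∧
      |ζ * q - p| ≤ |(q : ℝ)| ^ (-(k * η + (k - 1))) := by
  set δ := X ^ (-η)
  have hδ0 : 0 ≤ δ := Real.rpow_nonneg (by linarith) _
  have hδ : δ ≤ 4 * (|ζ| + 1) ^ k * X * δ := by
    refine le_mul_of_one_le_left hδ0 (one_le_mul_of_one_le_of_one_le ?_ hX)
    linarith [one_le_pow₀ (n := k) (le_add_of_nonneg_left (abs_nonneg ζ))]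
  obtain ⟨Y, hx, hYX, hY⟩ := exists_seq_of_hasSolutions_pow (by linarith) hs
  obtain ⟨n, rfl⟩ : ∃ n, k = n + 1 := ⟨k - 1, by omega⟩
  have hrel : Y 0 ^ n * Y (n + 1) = Y 1 ^ (n + 1) :=
    pow_mul_eq_pow_of_mul_eq_mul (fun i hi => mul_eq_mul_of_abs_pow_mul_sub_le hY
      hYX (by linarith) hsmall hi) n (by omega)
  obtain ⟨g, q, p, hg, hxq, hyp, hqg⟩ := exists_mul_eq_of_pow_mul_eq_pow_succ hx hrel
  have hq : q ≠ 0 := by rintro rfl; simp [hxq] at hx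
  have hg' : (1 : ℝ) ≤ g := by exact_mod_cast hg
  have happ : |ζ * q - p| ≤ δ / g := by
    have h1 := hY 1 (by omega)
    rw [hxq, hyp, Int.cast_mul, Int.cast_mul, pow_one,
      show ζ * (g * q) - g * p = (g : ℝ) * (ζ * q - p) by ring, abs_mul,
      abs_of_pos (by linarith : (0 : ℝ) < g)] at h1
    rwa [le_div_iff₀ (by linarith), mul_comm]
  have hQg : |(q : ℝ)| ^ n ≤ g := by exact_mod_cast hqg
  have hQX : |(q : ℝ)| ^ (n + 1) ≤ X := by
    calc |(q : ℝ)| ^ (n + 1) ≤ g * |(q : ℝ)| := by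
          rw [pow_succ]; exact mul_le_mul_of_nonneg_right hQg (abs_nonneg _)
      _ = |(Y 0 : ℝ)| := by
          rw [hxq, Int.cast_mul, abs_mul, abs_of_pos (by linarith : (0 : ℝ) < g)]
      _ ≤ X := hYX
  refine ⟨q, p, hq, happ.trans (div_le_self hδ0 hg'), ?_⟩
  have hexp : -(((n + 1 : ℕ) : ℝ) * η + ((n + 1 : ℕ) - 1)) = -((n + 1) * η + n) := by
    push_cast; ring
  rw [hexp]
  exact happ.trans (rpow_neg_div_le_rpow hη (by positivity) hQX hQg)

theorem PowApprox.one_of_pow {k : ℕ} {ζ η : ℝ} (hk : 0 < k) (hζ : Irrational ζ) (hη : 1 < η)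
    (h : PowApprox k ζ η) : PowApprox 1 ζ (k * η + (k - 1)) := by
  rw [PowApprox, frequently_atTop]
  intro B
  obtain ⟨c, hc, hcB⟩ := hζ.exists_pos_forall_lt_abs B
  have hsmall : ∀ᶠ X in atTop, 4 * (|ζ| + 1) ^ k * (X ^ (-(η - 1))) < 1 :=
    ((tendsto_rpow_neg_atTop (by linarith)).const_mul _).eventually
      (gt_mem_nhds (by simp))
  have hev : ∀ᶠ X : ℝ in atTop,
      1 ≤ X ∧ X ^ (-η) < c ∧ 4 * (|ζ| + 1) ^ k * X * X ^ (-η) < 1 := by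
    filter_upwards [eventually_ge_atTop 1,
      (tendsto_rpow_neg_atTop (y := η) (by linarith)).eventually (gt_mem_nhds hc), hsmall]
      with X hX hXc hXsmall
    refine ⟨hX, hXc, ?_⟩
    rwa [mul_assoc _ X, ← Real.rpow_one_add' (by linarith) (by linarith), ← sub_eq_add_neg,
      ← neg_sub]
  obtain ⟨X, hs, hX, hXc, hXsmall⟩ := (h.and_eventually hev).exists
  obtain ⟨q, p, hq, happ, hgood⟩ := exists_approx_of_hasSolutions_pow hk (by linarith) hX hXsmall hs
  refine ⟨|(q : ℝ)|, (hcB q p hq (happ.trans_lt hXc)).le,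
    hasSolutions_one_iff.mpr ⟨![q, p], by simp [hq], by simp, fun m => ?_⟩⟩
  simpa [Fin.fin_one_eq_zero m] using hgood

lemma abs_pow_mul_sub_pow_mul_le {ζ x y X δ : ℝ} {m n : ℕ} (hmn : m ≤ n) (hx : |x| ≤ X)
    (hxy : |ζ * x - y| ≤ δ) (hδX : δ ≤ X) :
    |ζ ^ (m + 1) * x ^ (n + 1) - x ^ (n - m) * y ^ (m + 1)|
      ≤ (n + 1) * (|ζ| + 1) ^ n * X ^ n * δ := by
  set C := |ζ| + 1
  have hX : 0 ≤ X := (abs_nonneg x).trans hx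
  have hC : 1 ≤ C := le_add_of_nonneg_left (abs_nonneg ζ)
  have hζx : |ζ * x| ≤ C * X := by
    rw [abs_mul]; nlinarith [abs_nonneg ζ, abs_nonneg x]
  have hy : |y| ≤ C * X := by
    have := abs_sub_abs_le_abs_sub y (ζ * x)
    rw [abs_sub_comm] at this
    have : |ζ| * |x| ≤ |ζ| * X := mul_le_mul_of_nonneg_left hx (abs_nonneg ζ)
    rw [abs_mul] at *
    nlinarith
  have hsplit : ζ ^ (m + 1) * x ^ (n + 1) - x ^ (n - m) * y ^ (m + 1)
      = x ^ (n - m) * ((ζ * x) ^ (m + 1) - y ^ (m + 1)) := by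
    rw [mul_pow, show n + 1 = n - m + (m + 1) by omega, pow_add]
    ring
  have hδ : 0 ≤ δ := (abs_nonneg _).trans hxy
  have hpow : |(ζ * x) ^ (m + 1) - y ^ (m + 1)| ≤ δ * (m + 1) * (C * X) ^ m := by
    refine (abs_pow_sub_pow_le _ _ _).trans ?_
    have := max_le hζx hy
    push_cast
    gcongr
  rw [hsplit, abs_mul, abs_pow]
  calc |x| ^ (n - m) * |(ζ * x) ^ (m + 1) - y ^ (m + 1)|
      ≤ X ^ (n - m) * (δ * (m + 1) * (C ^ m * X ^ m)) := by
        rw [← mul_pow]; gcongr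
    _ ≤ X ^ (n - m) * (δ * (n + 1) * (C ^ n * X ^ m)) := by
        have : (m : ℝ) ≤ n := by exact_mod_cast hmn
        gcongr
    _ = (n + 1) * C ^ n * X ^ n * δ := by
        rw [← pow_sub_mul_pow X hmn]; ring

lemma hasSolutions_pow_of_hasSolutions_one {n : ℕ} {ζ η t X : ℝ} (hX : 1 < X) (hη : 0 < η)
    (hXt : (n + 1) * (|ζ| + 1) ^ n * X ^ n * X ^ (-η) ≤ (X ^ (n + 1)) ^ (-t))
    (hs : HasSolutions 1 (fun i : Fin 1 => ζ ^ ((i : ℕ) + 1)) η X 1) :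
    HasSolutions (n + 1) (fun i : Fin (n + 1) => ζ ^ ((i : ℕ) + 1)) t (X ^ (n + 1)) 1 := by
  obtain ⟨w, hw, hwX, hwm⟩ := hasSolutions_one_iff.mp hs
  have hδ : X ^ (-η) < 1 := Real.rpow_lt_one_of_one_lt_of_neg hX (by linarith)
  have hx := head_ne_zero_of_abs_mul_sub_le hw hδ hwm
  have hxy : |ζ * w 0 - w 1| ≤ X ^ (-η) := by simpa using hwm 0
  refine hasSolutions_one_iff.mpr
    ⟨fun i => w 0 ^ (n + 1 - i) * w 1 ^ (i : ℕ), fun h => hx ?_, ?_, fun m => ?_⟩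
  · simpa using congrFun h 0
  · simpa [abs_pow] using pow_le_pow_left₀ (abs_nonneg _) hwX (n + 1)
  · simpa using (abs_pow_mul_sub_pow_mul_le (Nat.le_of_lt_succ m.is_lt) hwX hxy
      (by linarith)).trans hXt

theorem PowApprox.pow_of_one {k : ℕ} {ζ η t : ℝ} (hk : 0 < k) (hη : 0 < η)
    (h : PowApprox 1 ζ η) (ht : t < (η - (k - 1)) / k) : PowApprox k ζ t := by
  obtain ⟨n, rfl⟩ : ∃ n, k = n + 1 := ⟨k - 1, by omega⟩
  push_cast at ht
  set e := η - n - (n + 1) * t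
  have he : 0 < e := by
    rw [lt_div_iff₀ (by positivity)] at ht
    linarith
  have hev : ∀ᶠ X : ℝ in atTop,
      1 < X ∧ (n + 1) * (|ζ| + 1) ^ n * X ^ n * X ^ (-η) ≤ (X ^ (n + 1)) ^ (-t) := by
    filter_upwards [eventually_gt_atTop 1,
      (tendsto_rpow_atTop he).eventually_ge_atTop ((n + 1) * (|ζ| + 1) ^ n)] with X hX hXe
    have hX0 : 0 < X := by linarith
    refine ⟨hX, ?_⟩
    have hsplit : (X ^ (n + 1)) ^ (-t) = X ^ e * X ^ n * X ^ (-η) := by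
      rw [← Real.rpow_natCast, ← Real.rpow_natCast, ← Real.rpow_mul hX0.le,
        ← Real.rpow_add hX0, ← Real.rpow_add hX0]
      congr 1
      simp only [e]
      push_cast
      ring
    rw [hsplit]
    gcongr
  exact (tendsto_pow_atTop n.succ_ne_zero).frequently ((h.and_eventually hev).mono
    fun X ⟨hs, hX, hXt⟩ => hasSolutions_pow_of_hasSolutions_one hX hη hXt hs)

/-- Theorem (Schleischitz): if `λ_{k,1}(ζ) > 1` then
`λ_{1,1}(ζ) = k·λ_{k,1}(ζ) + k − 1 > 2k − 1 ≥ k`. -/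
theorem stmt12 (k : ℕ) (hk : 0 < k) (ζ : ℝ) (hζ : Irrational ζ)
    (h : 1 < lambdaPow k 1 ζ) :
    lambdaPow 1 1 ζ = (k : ℝ≥0∞) * lambdaPow k 1 ζ + ((k - 1 : ℕ) : ℝ≥0∞) ∧
    ((2 * k - 1 : ℕ) : ℝ≥0∞) < (k : ℝ≥0∞) * lambdaPow k 1 ζ + ((k - 1 : ℕ) : ℝ≥0∞) ∧
    (k : ℝ≥0∞) ≤ ((2 * k - 1 : ℕ) : ℝ≥0∞) := by
  have hk1 : (1 : ℝ) ≤ k := by exact_mod_cast hk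
  have hcast : ((k - 1 : ℕ) : ℝ≥0∞) = ENNReal.ofReal (k - 1) := by
    rw [← ENNReal.ofReal_natCast, Nat.cast_sub hk, Nat.cast_one]
  rw [lambdaPow_one_eq_supOfReal k] at h ⊢
  obtain ⟨η₀, hη₀, hPη₀⟩ := exists_lt_ofReal_of_lt_supOfReal h
  refine ⟨?_, ?_, by exact_mod_cast (by omega : k ≤ 2 * k - 1)⟩
  · rw [lambdaPow_one_eq_supOfReal 1, hcast, ← ENNReal.ofReal_natCast k]
    refine le_antisymm
      (supOfReal_le_ofReal_mul_add (by linarith) (by linarith)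
        fun η hη hQ t ht => hQ.pow_of_one hk (by linarith) ht)
      (ofReal_mul_supOfReal_add_le (by linarith) (by linarith) zero_le_one
        ⟨η₀, ENNReal.one_lt_ofReal.mp hη₀, hPη₀⟩ fun η hη hP => hP.one_of_pow hk hζ hη)
  · rw [show 2 * k - 1 = k + (k - 1) by omega, Nat.cast_add]
    refine ENNReal.add_lt_add_right (ENNReal.natCast_ne_top _) ?_
    simpa using (ENNReal.mul_lt_mul_iff_right (by exact_mod_cast hk.ne')
      (ENNReal.natCast_ne_top k)).mpr h
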